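/- arXiv:2509.00362 — 4 statements merged into one kernel-verified Lean document; each statement's English description precedes it below -/
import Mathlib

section
/- Let m ≤ n be positive integers and let W be a real m×n matrix with W Wᵀ = I_m and 1_mᵀ W 1_n = √(mn). Then there exist a real m×m orthogonal matrix U whose first column equals ξ_m = (1/√m)1_m and a real n×m matrix V with orthonormal columns (VᵀV = I_m) whose first column equals ξ_n = (1/√n)1_n, such that W = U Vᵀ. -/
/-!
The vector `x = Wᵀ ξ_m` is pinned down: `‖x‖ = 1` because `W Wᵀ = 1`, and `⟪x, ξ_n⟫ = 1` is the
entry-sum condition, so `x = ξ_n` (equality in Cauchy–Schwarz). Extending `ξ_m` to an orthogonal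
matrix `U` and putting `V = Wᵀ U` gives `Vᵀ V = Uᵀ W Wᵀ U = 1`, first column `Wᵀ ξ_m = ξ_n` of `V`,
and `U Vᵀ = U Uᵀ W = W`.
-/

open Matrix

namespace Matrix

theorem eq_of_dotProduct_self_eq {ι R : Type*} [Fintype ι] [CommRing R] [LinearOrder R]
    [IsStrictOrderedRing R] {x y : ι → R} (hx : x ⬝ᵥ x = x ⬝ᵥ y) (hy : y ⬝ᵥ y = x ⬝ᵥ y) :
    x = y := by
  have : (x - y) ⬝ᵥ (x - y) = 0 := by
    rw [sub_dotProduct, dotProduct_sub, dotProduct_sub, dotProduct_comm y x, hx, hy]; ring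
  exact sub_eq_zero.mp (dotProduct_self_eq_zero.mp this)

theorem exists_mem_orthogonalGroup_transpose_apply_eq {ι : Type*} [Fintype ι] [DecidableEq ι]
    (v : ι → ℝ) (hv : v ⬝ᵥ v = 1) (j : ι) :
    ∃ U ∈ orthogonalGroup ι ℝ, Uᵀ j = v := by
  have hunit : Orthonormal ℝ (({j} : Set ι).domRestrict fun _ ↦ WithLp.toLp 2 v) := by
    rw [orthonormal_subsingleton_iff]
    intro
    rw [norm_eq_sqrt_real_inner, EuclideanSpace.inner_eq_star_dotProduct]
    simp [hv]
  obtain ⟨b, hb⟩ := hunit.exists_orthonormalBasis_extension_of_card_eq (by simp)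
  refine ⟨(EuclideanSpace.basisFun ι ℝ).toBasis.toMatrix b,
    (EuclideanSpace.basisFun ι ℝ).toMatrix_orthonormalBasis_mem_orthogonal b, ?_⟩
  ext i
  simp [Module.Basis.toMatrix_apply, hb j rfl]

end Matrix

noncomputable def normalizedOnes (k : ℕ) : Fin k → ℝ := fun _ ↦ 1 / √k

theorem normalizedOnes_dotProduct_self {k : ℕ} (hk : 0 < k) :
    normalizedOnes k ⬝ᵥ normalizedOnes k = 1 := by
  have hk' : (0 : ℝ) < k := by exact_mod_cast hk
  simp only [dotProduct, normalizedOnes, Finset.sum_const, Finset.card_univ, Fintype.card_fin,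
    nsmul_eq_mul]
  field_simp
  rw [Real.sq_sqrt hk'.le]

theorem normalizedOnes_dotProduct_mulVec {m n : ℕ} (W : Matrix (Fin m) (Fin n) ℝ) :
    normalizedOnes m ⬝ᵥ (W *ᵥ normalizedOnes n) = (∑ i, ∑ j, W i j) / √(m * n) := by
  simp only [normalizedOnes, dotProduct, mulVec, Finset.mul_sum, Finset.sum_div]
  rw [Real.sqrt_mul (Nat.cast_nonneg m)]
  congr! 2
  ring

theorem transpose_mulVec_normalizedOnes {m n : ℕ} (hm : 0 < m) {W : Matrix (Fin m) (Fin n) ℝ}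
    (hW : W * Wᵀ = 1) (hsum : ∑ i, ∑ j, W i j = √(m * n)) :
    Wᵀ *ᵥ normalizedOnes m = normalizedOnes n := by
  rcases n.eq_zero_or_pos with rfl | hn
  · exact Subsingleton.elim _ _
  have hcross : (Wᵀ *ᵥ normalizedOnes m) ⬝ᵥ normalizedOnes n = 1 := by
    rw [mulVec_transpose, ← dotProduct_mulVec, normalizedOnes_dotProduct_mulVec, hsum,
      div_self (by positivity)]
  apply eq_of_dotProduct_self_eq
  · rw [hcross, mulVec_transpose, ← dotProduct_mulVec, mulVec_vecMul, hW, one_mulVec,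
      normalizedOnes_dotProduct_self hm]
  · rw [hcross, normalizedOnes_dotProduct_self hn]

theorem optimal_eq_mul_transpose_general
    (m n : ℕ) (hm : 0 < m)
    (W : Matrix (Fin m) (Fin n) ℝ)
    (hW : W * Wᵀ = 1)
    (hsum : ∑ i : Fin m, ∑ j : Fin n, W i j = Real.sqrt ((m : ℝ) * n)) :
    ∃ (U : Matrix (Fin m) (Fin m) ℝ) (V : Matrix (Fin n) (Fin m) ℝ),
      Uᵀ * U = 1 ∧
      (∀ i : Fin m, U i ⟨0, hm⟩ = 1 / Real.sqrt m) ∧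
      Vᵀ * V = 1 ∧
      (∀ i : Fin n, V i ⟨0, hm⟩ = 1 / Real.sqrt n) ∧
      W = U * Vᵀ := by
  obtain ⟨U, hU, hU₀⟩ := exists_mem_orthogonalGroup_transpose_apply_eq (normalizedOnes m)
    (normalizedOnes_dotProduct_self hm) ⟨0, hm⟩
  have hUtU : Uᵀ * U = 1 := (mem_orthogonalGroup_iff' _ _).mp hU
  have hUUt : U * Uᵀ = 1 := (mem_orthogonalGroup_iff _ _).mp hU
  refine ⟨U, Wᵀ * U, hUtU, fun i ↦ congrFun hU₀ i, ?_, fun i ↦ ?_, ?_⟩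
  · rw [transpose_mul, transpose_transpose, Matrix.mul_assoc, ← Matrix.mul_assoc W, hW,
      Matrix.one_mul, hUtU]
  · change (Wᵀ *ᵥ Uᵀ ⟨0, hm⟩) i = _
    rw [hU₀, transpose_mulVec_normalizedOnes hm hW hsum]
    rfl
  · rw [transpose_mul, transpose_transpose, ← Matrix.mul_assoc, hUUt, Matrix.one_mul]

/-- Every semi-orthogonal `m × n` real matrix `W` (`W * Wᵀ = 1`) whose
entry sum equals `√(m*n)` can be written as `W = U * Vᵀ` where `U` is an `m × m`
orthogonal matrix with first column `ξₘ` and `V` is an `n × m` matrix with orthonormal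
columns whose first column is `ξₙ`. -/
theorem optimal_eq_mul_transpose
    (m n : ℕ) (hm : 0 < m) (hmn : m ≤ n)
    (W : Matrix (Fin m) (Fin n) ℝ)
    (hW : W * Wᵀ = 1)
    (hsum : ∑ i : Fin m, ∑ j : Fin n, W i j = Real.sqrt ((m : ℝ) * n)) :
    ∃ (U : Matrix (Fin m) (Fin m) ℝ) (V : Matrix (Fin n) (Fin m) ℝ),
      Uᵀ * U = 1 ∧
      (∀ i : Fin m, U i ⟨0, hm⟩ = 1 / Real.sqrt m) ∧
      Vᵀ * V = 1 ∧
      (∀ i : Fin n, V i ⟨0, hm⟩ = 1 / Real.sqrt n) ∧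
      W = U * Vᵀ :=
  optimal_eq_mul_transpose_general m n hm W hW hsum
end

section
/- Let m ≥ 2 be an integer and define the m×m real matrix L by: L_{ii} = √((m−i)/(m−i+1)) for 1 ≤ i < m; L_{ij} = −1/√((m−j+1)(m−j)) for 1 ≤ j < i ≤ m; and L_{ij} = 0 otherwise (in particular L_{mm} = 0 and all entries above the diagonal vanish). Then L is lower triangular with nonnegative diagonal entries and satisfies L Lᵀ = I_m − (1/m) J_m, where J_m is the m×m all-ones matrix. -/
open Matrix Finset

/-- For `m ≥ 2`, the explicit lower-triangular matrix `L` (with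
`L_{ii} = √((m-i)/(m-i+1))` for `i < m` 1-based, `L_{ij} = -1/√((m-j+1)(m-j))` for
`j < i`, zero otherwise) has nonnegative diagonal and satisfies
`L * Lᵀ = I_m − (1/m) J_m` (the centering matrix). Indices below are 0-based, so the
1-based index `i` corresponds to `i+1`. -/
theorem cholesky_factor_of_centering
    (m : ℕ) (hm : 2 ≤ m)
    (L : Matrix (Fin m) (Fin m) ℝ)
    (hL : ∀ i j : Fin m, L i j =
      if j < i then -(1 / Real.sqrt (((m : ℝ) - j) * ((m : ℝ) - j - 1)))
      else if i = j ∧ (i : ℕ) + 1 < m then Real.sqrt (((m : ℝ) - i - 1) / ((m : ℝ) - i))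
      else 0) :
    (∀ i j : Fin m, i < j → L i j = 0) ∧
    (∀ i : Fin m, 0 ≤ L i i) ∧
    L * Lᵀ = (1 : Matrix (Fin m) (Fin m) ℝ) - (m : ℝ)⁻¹ • Matrix.of (fun _ _ => (1 : ℝ)) := by
  have hm0 : (0:ℝ) < (m:ℝ) := by
    have : 0 < m := lt_of_lt_of_le (by norm_num) hm
    exact_mod_cast this
  -- telescoping sum
  have tele : ∀ n : ℕ, n < m →
      ∑ j ∈ range n, (((m:ℝ) - j) * ((m:ℝ) - j - 1))⁻¹ = ((m:ℝ) - n)⁻¹ - (m:ℝ)⁻¹ := by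
    intro n
    induction n with
    | zero => intro _; simp
    | succ n ih =>
      intro h
      have hn : n < m := Nat.lt_of_succ_lt h
      rw [Finset.sum_range_succ, ih hn]
      have ha : (n:ℝ) + 2 ≤ (m:ℝ) := by exact_mod_cast h
      have h1 : (m:ℝ) - n ≠ 0 := by nlinarith
      have h2 : (m:ℝ) - n - 1 ≠ 0 := by nlinarith
      have h3 : (m:ℝ) - (n+1:ℕ) = (m:ℝ) - n - 1 := by push_cast; ring
      rw [h3]
      field_simp
      ring
  -- zero above diagonal
  have hupper : ∀ i j : Fin m, i < j → L i j = 0 := by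
    intro i j hij
    rw [hL, if_neg (by exact fun h => absurd (h.trans hij) (lt_irrefl _)),
      if_neg (by rintro ⟨rfl, -⟩; exact lt_irrefl _ hij)]
  -- key sum computation for i ≤ k
  have key : ∀ i k : Fin m, i ≤ k →
      ∑ j : Fin m, L i j * L k j = (if i = k then (1:ℝ) else 0) - (m:ℝ)⁻¹ := by
    intro i k hik
    have him : (i:ℕ) < m := i.isLt
    have hkm : (k:ℕ) < m := k.isLt
    set g : ℕ → ℝ := fun j => if h : j < m then L i ⟨j, h⟩ * L k ⟨j, h⟩ else 0 with hg
    have h1 : ∑ j : Fin m, L i j * L k j = ∑ j ∈ range m, g j := by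
      rw [← Fin.sum_univ_eq_sum_range]
      exact Finset.sum_congr rfl fun j _ => by simp [hg, j.isLt]
    have h2 : ∑ j ∈ range m, g j = ∑ j ∈ range ((i:ℕ)+1), g j := by
      refine (Finset.sum_subset (Finset.range_subset_range.mpr him) ?_).symm
      intro j hj hj'
      simp only [Finset.mem_range, not_lt] at hj hj'
      have hij : (i:ℕ) < j := hj'
      have : L i ⟨j, hj⟩ = 0 := hupper i ⟨j, hj⟩ (by simpa [Fin.lt_def] using hij)
      simp [hg, hj, this]
    have hlow : ∀ j ∈ range (i:ℕ), g j = (((m:ℝ) - j) * ((m:ℝ) - j - 1))⁻¹ := by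
      intro j hj
      simp only [Finset.mem_range] at hj
      have hjm : j < m := hj.trans him
      have hji : (⟨j, hjm⟩ : Fin m) < i := by simpa [Fin.lt_def] using hj
      have hjk : (⟨j, hjm⟩ : Fin m) < k := lt_of_lt_of_le hji hik
      have hx : (0:ℝ) ≤ ((m:ℝ) - j) * ((m:ℝ) - j - 1) := by
        have : (j:ℝ) + 1 ≤ (m:ℝ) := by exact_mod_cast hjm
        nlinarith
      simp only [hg, dif_pos hjm, hL i ⟨j, hjm⟩, hL k ⟨j, hjm⟩, if_pos hji, if_pos hjk]
      rw [neg_mul_neg, div_mul_div_comm, one_mul, Real.mul_self_sqrt hx]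
      simp
    have h3 : ∑ j ∈ range (i:ℕ), g j = ((m:ℝ) - i)⁻¹ - (m:ℝ)⁻¹ := by
      rw [Finset.sum_congr rfl hlow, tele _ him]
    rw [h1, h2, Finset.sum_range_succ, h3]
    have hgi : g (i:ℕ) = L i i * L k i := by simp [hg, him]
    rw [hgi]
    rcases eq_or_lt_of_le hik with heq | hlt
    · -- diagonal case
      subst heq
      rw [if_pos rfl]
      by_cases hi1 : (i:ℕ) + 1 < m
      · have hLii : L i i = Real.sqrt (((m:ℝ) - i - 1) / ((m:ℝ) - i)) := by
          rw [hL, if_neg (lt_irrefl _), if_pos ⟨rfl, hi1⟩]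
        have ha : ((i:ℝ)) + 2 ≤ (m:ℝ) := by exact_mod_cast hi1
        have hnn : (0:ℝ) ≤ ((m:ℝ) - i - 1) / ((m:ℝ) - i) := by
          apply div_nonneg <;> nlinarith
        rw [hLii, Real.mul_self_sqrt hnn]
        have h1 : (m:ℝ) - i ≠ 0 := by nlinarith
        field_simp
        ring
      · have hieq : (i:ℕ) + 1 = m := by omega
        have hLii : L i i = 0 := by
          rw [hL, if_neg (lt_irrefl _), if_neg (by rintro ⟨-, h⟩; exact hi1 h)]
        have : (m:ℝ) - i = 1 := by
          have : ((i:ℕ):ℝ) + 1 = (m:ℝ) := by exact_mod_cast hieq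
          linarith
        rw [hLii, this]
        ring
    · -- off-diagonal case
      rw [if_neg (Fin.ne_of_lt hlt)]
      have hi1 : (i:ℕ) + 1 < m := lt_of_le_of_lt (by exact_mod_cast hlt) hkm
      have ha : ((i:ℝ)) + 2 ≤ (m:ℝ) := by exact_mod_cast hi1
      have hLii : L i i = Real.sqrt (((m:ℝ) - i - 1) / ((m:ℝ) - i)) := by
        rw [hL, if_neg (lt_irrefl _), if_pos ⟨rfl, hi1⟩]
      have hLki : L k i = -(1 / Real.sqrt (((m:ℝ) - i) * ((m:ℝ) - i - 1))) := by
        rw [hL, if_pos hlt]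
      set a : ℝ := (m:ℝ) - i with hadef
      have ha0 : (0:ℝ) < a := by rw [hadef]; nlinarith
      have ha1 : (0:ℝ) < a - 1 := by rw [hadef]; nlinarith
      have hs : Real.sqrt a * Real.sqrt a = a := Real.mul_self_sqrt ha0.le
      have hsa : Real.sqrt a ≠ 0 := by positivity
      have hsa1 : Real.sqrt (a - 1) ≠ 0 := by positivity
      have hkey : L i i * L k i = -(a⁻¹) := by
        rw [hLii, hLki, Real.sqrt_div ha1.le, Real.sqrt_mul ha0.le]
        field_simp
        nlinarith [hs, Real.sq_sqrt ha1.le, Real.sqrt_nonneg a, Real.sqrt_nonneg (a-1)]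
      rw [hkey]
      ring
  -- assemble
  refine ⟨hupper, ?_, ?_⟩
  · intro i
    rw [hL, if_neg (lt_irrefl _)]
    split_ifs
    · exact Real.sqrt_nonneg _
    · exact le_refl 0
  · ext i k
    rw [Matrix.mul_apply]
    simp only [Matrix.transpose_apply, Matrix.sub_apply, Matrix.one_apply,
      Matrix.smul_apply, Matrix.of_apply, smul_eq_mul, mul_one]
    rcases le_total i k with h | h
    · rw [key i k h]
    · have := key k i h
      rw [show (∑ j : Fin m, L i j * L k j) = ∑ j : Fin m, L k j * L i j from
        Finset.sum_congr rfl fun j _ => mul_comm _ _, this]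
      by_cases hik : i = k <;> simp [hik, eq_comm]
end

section
/- Let 2 ≤ m ≤ n be integers, let L be the m×m lower triangular matrix with L_{ii} = √((m−i)/(m−i+1)) for i < m, L_{ij} = −1/√((m−j+1)(m−j)) for j < i, and L_{ij} = 0 otherwise, and let J be the m×n all-ones matrix. Let Q be a real m×n matrix with Q Qᵀ = I_m whose m-th row equals ξ_nᵀ = (1/√n)1_nᵀ. Then W = L Q + (1/√(mn)) J satisfies W Wᵀ = I_m and W ξ_n = ξ_m; that is, W is a semi-orthogonal matrix attaining the maximal entry sum √(mn). -/
/-! `L Lᵀ` is the centering matrix `I - J/m`: for `i ≤ j` the common strictly-lower entries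
of rows `i` and `j` contribute the telescoping sum `∑_{k<i} 1/((m-k)(m-k-1)) = 1/(m-i) - 1/m`,
and the diagonal entry contributes `1 - 1/(m-i)` if `i = j` and `-1/(m-i)` if `i < j`.
The last column of `L` is zero and `Q 1ₙ = √n eₘ` (the rows of `Q` are orthonormal and the
last one is `ξₙ`), so `L Q` has zero row sums. Hence the cross terms of `W Wᵀ` vanish,
`W Wᵀ = L Q Qᵀ Lᵀ + J/m = L Lᵀ + J/m = I`, and `W ξₙ = (1/√(mn)) J ξₙ = ξₘ`. -/

open Matrix Finset

section

variable {ι κ : Type*} [Fintype κ]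

theorem mulVec_row_of_mul_transpose_eq_one {R : Type*} [CommSemiring R] [DecidableEq ι]
    {Q : Matrix ι κ R} (hQ : Q * Qᵀ = 1) (r : ι) : Q *ᵥ Q r = Pi.single r 1 := by
  ext i
  simpa [mul_apply, mulVec, dotProduct, one_apply, Pi.single_apply] using congrFun₂ hQ i r

theorem mul_mulVec_row_eq_zero {μ R : Type*} [CommSemiring R] [Fintype ι] [DecidableEq ι]
    {L : Matrix μ ι R} {Q : Matrix ι κ R} (hQ : Q * Qᵀ = 1) {r : ι} (hL : ∀ i, L i r = 0) :
    (L * Q) *ᵥ Q r = 0 := by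
  rw [← mulVec_mulVec, mulVec_row_of_mul_transpose_eq_one hQ, mulVec_single_one]
  exact funext hL

theorem mul_mul_transpose_of_mul_transpose_eq_one {μ R : Type*} [CommSemiring R] [Fintype ι]
    [DecidableEq ι] (L : Matrix μ ι R) {Q : Matrix ι κ R} (hQ : Q * Qᵀ = 1) :
    L * Q * (L * Q)ᵀ = L * Lᵀ := by
  rw [transpose_mul, Matrix.mul_assoc, ← Matrix.mul_assoc Q, hQ, Matrix.one_mul]

theorem add_const_mul_transpose_self {A : Matrix ι κ ℝ} (hA : A *ᵥ 1 = 0) (c : ℝ) :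
    (A + c • of fun _ _ => 1) * (A + c • of fun _ _ => 1)ᵀ =
      A * Aᵀ + (c ^ 2 * Fintype.card κ) • of fun _ _ => 1 := by
  have hrow : ∀ i, ∑ k, A i k = 0 := fun i => by
    simpa [mulVec, dotProduct] using congrFun hA i
  ext i j
  simp [mul_apply, add_mul, mul_add, sum_add_distrib, ← mul_sum, ← sum_mul, hrow]
  ring

theorem add_const_mulVec_const {A : Matrix ι κ ℝ} (hA : A *ᵥ 1 = 0) (c d : ℝ) :
    (A + c • of fun _ _ => 1) *ᵥ (fun _ => d) = fun _ => c * d * Fintype.card κ := by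
  have hrow : ∀ i, ∑ k, A i k = 0 := fun i => by
    simpa [mulVec, dotProduct] using congrFun hA i
  ext i
  simp [mulVec, dotProduct, add_mul, sum_add_distrib, ← sum_mul, hrow]
  ring

end

theorem sum_range_one_div_sub_mul_sub_sub_one {x : ℝ} {i : ℕ} (hi : (i : ℝ) < x) :
    ∑ k ∈ range i, 1 / ((x - k) * (x - k - 1)) = 1 / (x - i) - 1 / x := by
  have hterm : ∀ k ∈ range i,
      1 / ((x - k) * (x - k - 1)) = 1 / (x - ↑(k + 1)) - 1 / (x - k) := by
    intro k hk
    have hk : (k : ℝ) + 1 ≤ i := by exact_mod_cast mem_range.mp hk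
    have h1 : x - k - 1 ≠ 0 := by linarith
    have h2 : x - k ≠ 0 := by linarith
    rw [Nat.cast_succ, sub_add_eq_sub_sub, div_sub_div _ _ h1 h2]
    ring
  rw [sum_congr rfl hterm, sum_range_sub (fun k : ℕ => 1 / (x - k)), Nat.cast_zero, sub_zero]

theorem Real.sqrt_sub_one_div_div_sqrt_mul_sub_one {a : ℝ} (ha : 1 < a) :
    √((a - 1) / a) / √(a * (a - 1)) = 1 / a := by
  have h1 : 0 < √(a - 1) := Real.sqrt_pos.2 (by linarith)
  have h2 : 0 < √a := Real.sqrt_pos.2 (by linarith)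
  rw [Real.sqrt_div' _ (by linarith), Real.sqrt_mul (by linarith)]
  field_simp
  exact (Real.sq_sqrt (by linarith : (0 : ℝ) ≤ a)).symm

theorem Fin.cast_val_add_one_le {m : ℕ} (k : Fin m) : (k : ℝ) + 1 ≤ m := by
  exact_mod_cast k.isLt

noncomputable def centeringCholesky (m : ℕ) : Matrix (Fin m) (Fin m) ℝ :=
  of fun i j =>
    if j < i then -(1 / Real.sqrt (((m : ℝ) - j) * ((m : ℝ) - j - 1)))
    else if i = j ∧ (i : ℕ) + 1 < m then Real.sqrt (((m : ℝ) - i - 1) / ((m : ℝ) - i))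
    else 0

namespace centeringCholesky

variable {m : ℕ}

theorem apply_of_lt {i j : Fin m} (h : j < i) :
    centeringCholesky m i j = -(1 / Real.sqrt (((m : ℝ) - j) * ((m : ℝ) - j - 1))) :=
  if_pos h

theorem apply_eq_zero_of_lt {i j : Fin m} (h : i < j) : centeringCholesky m i j = 0 := by
  simp [centeringCholesky, h.not_gt, h.ne]

-- the side condition `i + 1 < m` can be dropped: at `i = m - 1` the formula gives `√0 = 0`
theorem apply_self (i : Fin m) :
    centeringCholesky m i i = Real.sqrt (((m : ℝ) - i - 1) / ((m : ℝ) - i)) := by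
  by_cases hi : (i : ℕ) + 1 < m
  · simp [centeringCholesky, hi]
  · have : (i : ℝ) + 1 = m := by exact_mod_cast (by omega : (i : ℕ) + 1 = m)
    simp [centeringCholesky, hi, show (m : ℝ) - i - 1 = 0 by linarith]

theorem apply_last (hm : 0 < m) (i : Fin m) : centeringCholesky m i ⟨m - 1, by omega⟩ = 0 := by
  have hi : i ≤ ⟨m - 1, by omega⟩ := Fin.le_def.2 (show (i : ℕ) ≤ m - 1 by omega)
  rcases hi.eq_or_lt with rfl | h
  · rw [apply_self, Nat.cast_sub hm, Nat.cast_one]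
    simp
  · exact apply_eq_zero_of_lt h

theorem sum_mul_of_le {i j : Fin m} (hij : i ≤ j) :
    ∑ k, centeringCholesky m i k * centeringCholesky m j k =
      ∑ k ∈ range i, 1 / (((m : ℝ) - k) * ((m : ℝ) - k - 1)) +
        centeringCholesky m i i * centeringCholesky m j i := by
  set f : ℕ → ℝ := fun k => if k < i then 1 / (((m : ℝ) - k) * ((m : ℝ) - k - 1))
    else if k = i then centeringCholesky m i i * centeringCholesky m j i else 0
  have hf : ∀ k : Fin m, centeringCholesky m i k * centeringCholesky m j k = f k := by
    intro k
    rcases lt_trichotomy k i with hki | rfl | hik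
    · have hk := Fin.cast_val_add_one_le k
      have hp : 0 ≤ ((m : ℝ) - k) * ((m : ℝ) - k - 1) :=
        mul_nonneg (by linarith) (by linarith)
      rw [apply_of_lt hki, apply_of_lt (hki.trans_le hij), neg_mul_neg, div_mul_div_comm,
        one_mul, Real.mul_self_sqrt hp]
      exact (if_pos hki).symm
    · simp [f]
    · rw [apply_eq_zero_of_lt hik, zero_mul]
      simp [f, Fin.val_ne_of_ne hik.ne', (Fin.lt_def.mp hik).not_gt]
  have hvanish : ∀ k ∈ range m, k ∉ range (i + 1) → f k = 0 := by
    intro k _ hk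
    simp only [mem_range] at hk
    simp [f, show ¬ k < i by omega, show k ≠ i by omega]
  rw [sum_congr rfl fun k _ => hf k, Fin.sum_univ_eq_sum_range f,
    ← sum_subset (range_subset_range.2 i.isLt) hvanish, sum_range_succ]
  simp only [f, lt_irrefl, if_false, if_true]
  exact congrArg (· + _) (sum_congr rfl fun k hk => if_pos (mem_range.mp hk))

theorem mul_transpose : centeringCholesky m * (centeringCholesky m)ᵀ =
    1 - (m : ℝ)⁻¹ • of fun _ _ => 1 := by
  ext i j
  simp only [Matrix.mul_apply, transpose_apply, Matrix.sub_apply, one_apply, Matrix.smul_apply,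
    of_apply, smul_eq_mul, mul_one]
  wlog hij : i ≤ j generalizing i j
  · simpa [mul_comm, eq_comm] using this j i (le_of_not_ge hij)
  have hi := Fin.cast_val_add_one_le i
  rw [sum_mul_of_le hij, sum_range_one_div_sub_mul_sub_sub_one (by linarith)]
  rcases hij.eq_or_lt with rfl | hlt
  · have hmi : (m : ℝ) - i ≠ 0 := by linarith
    rw [if_pos rfl, apply_self, Real.mul_self_sqrt (div_nonneg (by linarith) (by linarith))]
    field_simp
    ring
  · have hj : (i : ℝ) < j := by exact_mod_cast Fin.lt_def.mp hlt
    have hj' := Fin.cast_val_add_one_le j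
    rw [if_neg hlt.ne, apply_self, apply_of_lt hlt, mul_neg, mul_one_div,
      Real.sqrt_sub_one_div_div_sqrt_mul_sub_one (by linarith)]
    ring

end centeringCholesky

/-- Let `2 ≤ m ≤ n`, let `L` be the explicit Cholesky factor of the
centering matrix (0-based indices below; the 1-based index `i` corresponds to `i+1`),
and let `Q` be an `m × n` matrix with `Q * Qᵀ = 1` whose last row equals `ξₙᵀ`. Then
`W = L * Q + (1/√(m*n)) J` satisfies `W * Wᵀ = 1` and `W ξₙ = ξₘ`; i.e. `W` is a
semi-orthogonal matrix attaining the maximal entry sum. -/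
theorem cholesky_construction_is_optimal
    (m n : ℕ) (hm : 2 ≤ m) (hmn : m ≤ n)
    (L : Matrix (Fin m) (Fin m) ℝ)
    (hL : ∀ i j : Fin m, L i j =
      if j < i then -(1 / Real.sqrt (((m : ℝ) - j) * ((m : ℝ) - j - 1)))
      else if i = j ∧ (i : ℕ) + 1 < m then Real.sqrt (((m : ℝ) - i - 1) / ((m : ℝ) - i))
      else 0)
    (Q : Matrix (Fin m) (Fin n) ℝ)
    (hQ : Q * Qᵀ = 1)
    (hQlast : ∀ j : Fin n, Q ⟨m - 1, by omega⟩ j = 1 / Real.sqrt n)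
    (W : Matrix (Fin m) (Fin n) ℝ)
    (hWdef : W = L * Q + (1 / Real.sqrt ((m : ℝ) * n)) • Matrix.of (fun _ _ => (1 : ℝ))) :
    W * Wᵀ = 1 ∧
    W.mulVec (fun _ : Fin n => 1 / Real.sqrt n) = fun _ : Fin m => 1 / Real.sqrt m := by
  obtain rfl : L = centeringCholesky m := Matrix.ext hL
  subst hWdef
  have hm0 : (0 : ℝ) < m := by exact_mod_cast (by omega : 0 < m)
  have hn0 : (0 : ℝ) < n := by exact_mod_cast (by omega : 0 < n)
  have hones : (1 : Fin n → ℝ) = Real.sqrt n • Q ⟨m - 1, by omega⟩ := by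
    ext j
    rw [Pi.smul_apply, hQlast, smul_eq_mul, mul_one_div_cancel (Real.sqrt_pos.2 hn0).ne',
      Pi.one_apply]
  have hrow : (centeringCholesky m * Q) *ᵥ 1 = 0 := by
    rw [hones, mulVec_smul,
      mul_mulVec_row_eq_zero hQ (centeringCholesky.apply_last (by omega)), smul_zero]
  refine ⟨?_, ?_⟩
  · have hc : (1 / Real.sqrt ((m : ℝ) * n)) ^ 2 * n = (m : ℝ)⁻¹ := by
      rw [div_pow, Real.sq_sqrt (by positivity)]
      field_simp
    rw [add_const_mul_transpose_self hrow, mul_mul_transpose_of_mul_transpose_eq_one _ hQ,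
      centeringCholesky.mul_transpose, Fintype.card_fin, hc, sub_add_cancel]
  · rw [add_const_mulVec_const hrow, Fintype.card_fin]
    ext
    rw [Real.sqrt_mul hm0.le]
    field_simp
    exact (Real.sq_sqrt hn0.le).symm
end

section
/- Let X be a real random variable with Gaussian distribution N(μ, σ²), where μ ∈ ℝ and σ > 0, let α = μ/σ, and let Z = max(0, X). Then Var[Z] = (μ² + σ²) Φ(α) + μσ φ(α) − (σ φ(α) + μ Φ(α))², where φ and Φ are the standard normal density and cumulative distribution function. Equivalently, E[Z²] = (μ² + σ²) Φ(α) + μσ φ(α). -/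
open MeasureTheory ProbabilityTheory

/-- The standard normal probability density function. -/
noncomputable def stdNormalPDF (t : ℝ) : ℝ :=
  (Real.sqrt (2 * Real.pi))⁻¹ * Real.exp (-t ^ 2 / 2)

/-- The standard normal cumulative distribution function. -/
noncomputable def stdNormalCDF (z : ℝ) : ℝ :=
  ∫ t in Set.Iic z, stdNormalPDF t

/-!
Write `X = σ T + μ` with `T` standard normal; then `max 0 X = σ · max 0 (T + α)`, so the moments
of `max 0 X` are `σ^k ∫_{-α}^∞ (t + α)^k φ(t) dt`. These truncated moments follow from `φ' = -t φ`
(integrating `t φ` and, by parts, `t² φ`) and the symmetry `φ(-t) = φ(t)`.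
-/

open Real Set

lemma stdNormalPDF_eq_gaussianPDFReal : stdNormalPDF = gaussianPDFReal 0 1 := by
  funext t
  simp [gaussianPDFReal, stdNormalPDF]

lemma stdNormalPDF_neg (t : ℝ) : stdNormalPDF (-t) = stdNormalPDF t := by
  simp [stdNormalPDF]

lemma hasDerivAt_stdNormalPDF (t : ℝ) : HasDerivAt stdNormalPDF (-t * stdNormalPDF t) t := by
  have h : HasDerivAt (fun t : ℝ => -t ^ 2 / 2) (-t) t :=
    ((hasDerivAt_pow 2 t).neg.div_const 2).congr_deriv (by ring)
  unfold stdNormalPDF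
  exact (h.exp.const_mul (√(2 * π))⁻¹).congr_deriv (by ring)

lemma integrable_pow_mul_stdNormalPDF (n : ℕ) : Integrable (fun t => t ^ n * stdNormalPDF t) := by
  have h := integrable_rpow_mul_exp_neg_mul_sq (b := 1 / 2) (by norm_num) (s := n)
    (neg_one_lt_zero.trans_le n.cast_nonneg)
  refine (h.const_mul (√(2 * π))⁻¹).congr (ae_of_all _ fun t => ?_)
  simp only [stdNormalPDF, rpow_natCast]
  ring_nf

lemma integrable_stdNormalPDF : Integrable stdNormalPDF := by
  simpa using integrable_pow_mul_stdNormalPDF 0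

lemma integrable_mul_stdNormalPDF : Integrable (fun t => t * stdNormalPDF t) := by
  simpa using integrable_pow_mul_stdNormalPDF 1

lemma integral_Ioi_of_hasDerivAt_of_integrableOn {E : Type*} [NormedAddCommGroup E]
    [NormedSpace ℝ E] [CompleteSpace E] {f f' : ℝ → E} {a : ℝ}
    (hderiv : ∀ x ∈ Ici a, HasDerivAt f (f' x) x) (hf' : IntegrableOn f' (Ioi a))
    (hf : IntegrableOn f (Ioi a)) : ∫ x in Ioi a, f' x = -f a := by
  have hlim := tendsto_zero_of_hasDerivAt_of_integrableOn_Ioi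
    (fun x hx => hderiv x (Ioi_subset_Ici_self hx)) hf' hf
  rw [integral_Ioi_of_hasDerivAt_of_tendsto' hderiv hf' hlim, zero_sub]

lemma integral_Ioi_stdNormalPDF (a : ℝ) : ∫ t in Ioi a, stdNormalPDF t = stdNormalCDF (-a) := by
  rw [stdNormalCDF, ← integral_comp_neg_Ioi]
  simp only [stdNormalPDF_neg]

lemma integral_Ioi_mul_stdNormalPDF (a : ℝ) :
    ∫ t in Ioi a, t * stdNormalPDF t = stdNormalPDF a := by
  have hderiv (x : ℝ) : HasDerivAt (fun t => -stdNormalPDF t) (x * stdNormalPDF x) x :=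
    (hasDerivAt_stdNormalPDF x).neg.congr_deriv (by ring)
  simpa using integral_Ioi_of_hasDerivAt_of_integrableOn (fun x _ => hderiv x)
    integrable_mul_stdNormalPDF.integrableOn integrable_stdNormalPDF.neg.integrableOn

lemma integral_Ioi_sq_mul_stdNormalPDF (a : ℝ) :
    ∫ t in Ioi a, t ^ 2 * stdNormalPDF t = stdNormalCDF (-a) + a * stdNormalPDF a := by
  have hderiv (x : ℝ) : HasDerivAt (fun t => -(t * stdNormalPDF t))
      (x ^ 2 * stdNormalPDF x - stdNormalPDF x) x :=
    ((hasDerivAt_id' x).mul (hasDerivAt_stdNormalPDF x)).neg.congr_deriv (by ring)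
  have hsq := integrable_pow_mul_stdNormalPDF 2
  have h := integral_Ioi_of_hasDerivAt_of_integrableOn (a := a) (fun x _ => hderiv x)
    (hsq.sub integrable_stdNormalPDF).integrableOn integrable_mul_stdNormalPDF.neg.integrableOn
  rw [integral_sub hsq.integrableOn integrable_stdNormalPDF.integrableOn,
    integral_Ioi_stdNormalPDF] at h
  linarith

lemma integral_comp_max_zero_add_mul {g : ℝ → ℝ} (hg : g 0 = 0) (h : ℝ → ℝ) (a : ℝ) :
    ∫ t, g (max 0 (t + a)) * h t = ∫ t in Ioi (-a), g (t + a) * h t := by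
  rw [← setIntegral_eq_integral_of_forall_compl_eq_zero (s := Ioi (-a)) fun t ht => ?_]
  · refine setIntegral_congr_fun measurableSet_Ioi fun t ht => ?_
    rw [max_eq_right (by linarith [mem_Ioi.mp ht])]
  · rw [max_eq_left (by linarith [notMem_Ioi.mp ht]), hg, zero_mul]

lemma integral_max_zero_add_mul_stdNormalPDF (a : ℝ) :
    ∫ t, max 0 (t + a) * stdNormalPDF t = stdNormalPDF a + a * stdNormalCDF a := by
  have htrunc := integral_comp_max_zero_add_mul (g := id) rfl stdNormalPDF a
  simp only [id_eq, add_mul] at htrunc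
  rw [htrunc, integral_add integrable_mul_stdNormalPDF.integrableOn
      (integrable_stdNormalPDF.const_mul a).integrableOn, integral_const_mul,
    integral_Ioi_mul_stdNormalPDF, integral_Ioi_stdNormalPDF, stdNormalPDF_neg, neg_neg]

lemma integral_max_zero_add_sq_mul_stdNormalPDF (a : ℝ) :
    ∫ t, max 0 (t + a) ^ 2 * stdNormalPDF t
      = (1 + a ^ 2) * stdNormalCDF a + a * stdNormalPDF a := by
  have htrunc := integral_comp_max_zero_add_mul (g := (· ^ 2)) (zero_pow two_ne_zero)
    stdNormalPDF a
  have hexpand (t : ℝ) : (t + a) ^ 2 * stdNormalPDF t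
      = t ^ 2 * stdNormalPDF t + 2 * a * (t * stdNormalPDF t) + a ^ 2 * stdNormalPDF t := by
    ring
  simp only [hexpand] at htrunc
  have hsq := integrable_pow_mul_stdNormalPDF 2
  have hlin := integrable_mul_stdNormalPDF.const_mul (2 * a)
  have hquad : Integrable fun t => t ^ 2 * stdNormalPDF t + 2 * a * (t * stdNormalPDF t) :=
    hsq.add hlin
  rw [htrunc, integral_add hquad.integrableOn
      (integrable_stdNormalPDF.const_mul _).integrableOn,
    integral_add hsq.integrableOn hlin.integrableOn, integral_const_mul, integral_const_mul,
    integral_Ioi_sq_mul_stdNormalPDF, integral_Ioi_mul_stdNormalPDF, integral_Ioi_stdNormalPDF,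
    stdNormalPDF_neg, neg_neg]
  ring

lemma integral_gaussianReal_eq_integral_stdNormalPDF (μ : ℝ) {σ : ℝ} (hσ : σ ≠ 0) (f : ℝ → ℝ) :
    ∫ x, f x ∂gaussianReal μ ⟨σ ^ 2, sq_nonneg σ⟩ = ∫ t, f (σ * t + μ) * stdNormalPDF t := by
  have hmap :
      (gaussianReal 0 1).map (fun t => σ * t + μ) = gaussianReal μ ⟨σ ^ 2, sq_nonneg σ⟩ := by
    rw [show (fun t => σ * t + μ) = (· + μ) ∘ (σ * ·) from rfl,
      ← Measure.map_map (measurable_add_const μ) (measurable_const_mul σ),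
      gaussianReal_map_const_mul, gaussianReal_map_add_const, mul_zero, zero_add, mul_one]
    rfl
  have hemb : MeasurableEmbedding (fun t => σ * t + μ) :=
    (Homeomorph.addRight μ).measurableEmbedding.comp (Homeomorph.mulLeft₀ σ hσ).measurableEmbedding
  rw [← hmap, hemb.integral_map, integral_gaussianReal_eq_integral_smul one_ne_zero,
    ← stdNormalPDF_eq_gaussianPDFReal]
  simp only [smul_eq_mul, mul_comm]

/-- For `X ~ N(μ, σ²)` with `σ > 0`, `α = μ/σ`, and `Z = max(0, X)`:
`E[Z²] = (μ² + σ²) Φ(α) + μσ φ(α)` and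
`Var[Z] = (μ² + σ²) Φ(α) + μσ φ(α) − (σ φ(α) + μ Φ(α))²`. -/
theorem rectified_gaussian_variance
    (μ σ α : ℝ) (hσ : 0 < σ) (hα : α = μ / σ) :
    (∫ x, (max 0 x) ^ 2 ∂(gaussianReal μ ⟨σ ^ 2, sq_nonneg σ⟩)
        = (μ ^ 2 + σ ^ 2) * stdNormalCDF α + μ * σ * stdNormalPDF α) ∧
    ((∫ x, (max 0 x) ^ 2 ∂(gaussianReal μ ⟨σ ^ 2, sq_nonneg σ⟩))
        - (∫ x, max 0 x ∂(gaussianReal μ ⟨σ ^ 2, sq_nonneg σ⟩)) ^ 2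
      = (μ ^ 2 + σ ^ 2) * stdNormalCDF α + μ * σ * stdNormalPDF α
        - (σ * stdNormalPDF α + μ * stdNormalCDF α) ^ 2) := by
  have hμ : μ = σ * α := by rw [hα, mul_div_cancel₀ _ hσ.ne']
  have hscale (t : ℝ) : max 0 (σ * t + μ) = σ * max 0 (t + α) := by
    rw [mul_max_of_nonneg _ _ hσ.le, mul_zero, hμ, mul_add]
  have hmean : ∫ x, max 0 x ∂gaussianReal μ ⟨σ ^ 2, sq_nonneg σ⟩
      = σ * stdNormalPDF α + μ * stdNormalCDF α := by
    simp_rw [integral_gaussianReal_eq_integral_stdNormalPDF μ hσ.ne', hscale, mul_assoc,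
      integral_const_mul, integral_max_zero_add_mul_stdNormalPDF]
    rw [hμ]
    ring
  have hsecond : ∫ x, max 0 x ^ 2 ∂gaussianReal μ ⟨σ ^ 2, sq_nonneg σ⟩
      = (μ ^ 2 + σ ^ 2) * stdNormalCDF α + μ * σ * stdNormalPDF α := by
    simp_rw [integral_gaussianReal_eq_integral_stdNormalPDF μ hσ.ne', hscale, mul_pow, mul_assoc,
      integral_const_mul, integral_max_zero_add_sq_mul_stdNormalPDF]
    rw [hμ]
    ring
  exact ⟨hsecond, by rw [hsecond, hmean]⟩
end
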